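/- arXiv:math/0108127 — 3 statements merged into one kernel-verified Lean document; each statement's English description precedes it below -/
import Mathlib

section
/- Let S be a prefix-free set of binary strings and Omega = Σ_{p∈S} 2^{-|p|}. Then for any finite F ⊆ S with Σ_{p∈F} 2^{-|p|} > Omega - 2^{-N}, every p ∈ S with |p| ≤ N belongs to F. -/
open Finset

private lemma kraft_finset (F : Finset (List Bool))
    (hpf : ∀ p ∈ F, ∀ q ∈ F, p <+: q → p = q) :
    (∑ p ∈ F, (2 : ℝ) ^ (-(p.length : ℤ))) ≤ 1 := by
  set L := F.sup List.length with hL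
  have hlen : ∀ p ∈ F, p.length ≤ L := fun p hp => Finset.le_sup hp
  -- extension sets
  set E : List Bool → Finset (List Bool) :=
    fun p => (Finset.univ : Finset (List.Vector Bool (L - p.length))).image
      (fun v => p ++ v.toList) with hE
  have hcardE : ∀ p : List Bool, (E p).card = 2 ^ (L - p.length) := by
    intro p
    rw [hE]
    rw [Finset.card_image_of_injective _ (fun a b h => by
      apply List.Vector.eq
      exact List.append_cancel_left h)]
    simp [Finset.card_univ]
  have hmem : ∀ p, p.length ≤ L → ∀ x ∈ E p, x.length = L ∧ p <+: x := by
    intro p hp x hx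
    simp only [hE, Finset.mem_image] at hx
    obtain ⟨v, _, rfl⟩ := hx
    constructor
    · simp [v.toList_length]; omega
    · exact ⟨v.toList, rfl⟩
  have hdisj : (F : Set (List Bool)).PairwiseDisjoint E := by
    intro p hp q hq hpq
    simp only [Finset.disjoint_left]
    intro x hxp hxq
    obtain ⟨_, hpx⟩ := hmem p (hlen p hp) x hxp
    obtain ⟨_, hqx⟩ := hmem q (hlen q hq) x hxq
    rcases List.prefix_or_prefix_of_prefix hpx hqx with h | h
    · exact hpq (hpf p hp q hq h)
    · exact hpq ((hpf q hq p hp h).symm)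
  have hsub : F.biUnion E ⊆ (Finset.univ : Finset (List.Vector Bool L)).image
      List.Vector.toList := by
    intro x hx
    simp only [Finset.mem_biUnion] at hx
    obtain ⟨p, hp, hxp⟩ := hx
    have := (hmem p (hlen p hp) x hxp).1
    simp only [Finset.mem_image]
    exact ⟨⟨x, this⟩, Finset.mem_univ _, rfl⟩
  have hcount : ∑ p ∈ F, 2 ^ (L - p.length) ≤ 2 ^ L := by
    calc ∑ p ∈ F, 2 ^ (L - p.length) = ∑ p ∈ F, (E p).card := by
          simp [hcardE]
      _ = (F.biUnion E).card := (Finset.card_biUnion (fun p hp q hq h => hdisj hp hq h)).symm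
      _ ≤ _ := Finset.card_le_card hsub
      _ ≤ 2 ^ L := by
          calc _ ≤ (Finset.univ : Finset (List.Vector Bool L)).card :=
                Finset.card_image_le
            _ = 2 ^ L := by simp [Finset.card_univ]
  -- convert to reals
  have key : ∀ p ∈ F, (2 : ℝ) ^ (-(p.length : ℤ)) = (2 ^ (L - p.length) : ℕ) / 2 ^ L := by
    intro p hp
    have h := hlen p hp
    push_cast
    rw [← zpow_natCast (2:ℝ) (L - p.length), ← zpow_natCast (2:ℝ) L, ← zpow_sub₀ (by norm_num)]
    congr 1
    omega
  rw [Finset.sum_congr rfl key, ← Finset.sum_div]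
  rw [div_le_one (by positivity)]
  calc (∑ p ∈ F, ((2 ^ (L - p.length) : ℕ) : ℝ)) = ((∑ p ∈ F, 2 ^ (L - p.length) : ℕ) : ℝ) := by
        push_cast; ring
    _ ≤ ((2:ℕ) ^ L : ℝ) := by exact_mod_cast hcount
    _ = 2 ^ L := by push_cast; ring

private lemma kraft_summable (S : Set (List Bool))
    (hpf : ∀ p ∈ S, ∀ q ∈ S, p <+: q → p = q) :
    Summable (fun p : S => (2 : ℝ) ^ (-((p : List Bool).length : ℤ))) := by
  apply summable_of_sum_le (c := 1)
  · intro p; positivity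
  · intro u
    have himg : ∑ x ∈ u.image Subtype.val, (2:ℝ) ^ (-(x.length : ℤ))
        = ∑ x ∈ u, (2:ℝ) ^ (-((x : List Bool).length : ℤ)) :=
      Finset.sum_image (by intro a _ b _ h; exact Subtype.ext h)
    rw [← himg]
    apply kraft_finset
    intro p hp q hq h
    simp only [Finset.mem_image] at hp hq
    obtain ⟨⟨p, hpS⟩, _, rfl⟩ := hp
    obtain ⟨⟨q, hqS⟩, _, rfl⟩ := hq
    exact hpf p hpS q hqS h

/-- Knowing Omega to within `2^(-N)` solves the halting problem for programs of
length `≤ N`: once a finite subset `F` of the prefix-free set `S` accumulates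
weight within `2^(-N)` of `Ω = Σ_{p ∈ S} 2^(-|p|)`, every `p ∈ S` with
`|p| ≤ N` already lies in `F`. -/
theorem omega_bits_solve_halting (S : Set (List Bool))
    (hpf : ∀ p ∈ S, ∀ q ∈ S, p <+: q → p = q)
    (F : Finset (List Bool)) (hF : ↑F ⊆ S) (N : ℕ)
    (hclose : (∑ p ∈ F, (2 : ℝ) ^ (-(p.length : ℤ)))
        > (∑' p : S, (2 : ℝ) ^ (-((p : List Bool).length : ℤ))) - 2 ^ (-(N : ℤ))) :
    ∀ p ∈ S, p.length ≤ N → p ∈ F := by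
  intro p hpS hpN
  by_contra hpF
  have hsum := kraft_summable S hpf
  classical
  -- finset of subtype corresponding to insert p F
  set u : Finset S := insert ⟨p, hpS⟩ (F.subtype (· ∈ S)) with hu
  have hle : ∑ q ∈ u, (2:ℝ) ^ (-((q : List Bool).length : ℤ))
      ≤ ∑' q : S, (2:ℝ) ^ (-((q : List Bool).length : ℤ)) :=
    Summable.sum_le_tsum u (fun q _ => by positivity) hsum
  have hpu : (⟨p, hpS⟩ : S) ∉ F.subtype (· ∈ S) := by
    simp only [Finset.mem_subtype]
    exact hpF
  have husum : ∑ q ∈ u, (2:ℝ) ^ (-((q : List Bool).length : ℤ))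
      = 2 ^ (-(p.length : ℤ)) + ∑ q ∈ F, (2:ℝ) ^ (-(q.length : ℤ)) := by
    rw [hu, Finset.sum_insert hpu]
    congr 1
    rw [show (∑ x ∈ Finset.subtype (fun x => x ∈ S) F, (2:ℝ) ^ (-((x : List Bool).length : ℤ)))
      = ∑ x ∈ F.filter (· ∈ S), (2:ℝ) ^ (-(x.length : ℤ)) from
      Finset.sum_subtype_eq_sum_filter (fun x : List Bool => (2:ℝ) ^ (-(x.length : ℤ))) (p := fun x => x ∈ S) (s := F)]
    rw [Finset.filter_true_of_mem (fun x hx => hF hx)]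
  have hpow : (2:ℝ) ^ (-(N : ℤ)) ≤ 2 ^ (-(p.length : ℤ)) :=
    zpow_le_zpow_right₀ one_le_two (by omega)
  linarith [hle, husum, hpow, hclose]
end

section
/- Only finitely many numbers can be proven incompressible in a sound recursively axiomatized theory (Chaitin's incompleteness, abstract form): suppose P : ℕ → ℕ → Prop is a computably enumerable relation ('P n m means there is a proof that C(m) ≥ n') that is sound (P n m → C(m) ≥ n, for the complexity C of a universal machine satisfying the invariance property). Then there is a constant L such that for all n > L, P n m holds for no m; i.e., the theory proves 'C(m) ≥ n' for at most finitely many thresholds n. -/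
/-!
If sound proofs of `n ≤ C m` existed for unboundedly many `n`, a computable search through
the enumeration would yield `f` with `k < C (f k)` for every `k`. Invariance bounds
`C (f k)` by `2 log₂ (k + 2) + c`, which is eventually smaller than `k`.
-/

open Nat.Partrec (Code)
open Nat.Partrec.Code

def RERel (R : ℕ → ℕ → Prop) : Prop :=
  ∃ W : ℕ →. ℕ, Partrec W ∧ ∀ n m : ℕ, (R n m ↔ (W (Nat.pair n m)).Dom)

theorem Nat.Partrec.Code.eval_dom_iff_exists_evaln_isSome (c : Code) (n : ℕ) :
    (eval c n).Dom ↔ ∃ s, (evaln s c n).isSome := by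
  simp only [Part.dom_iff_mem, evaln_complete, Option.isSome_iff_exists]
  exact ⟨fun ⟨x, s, hs⟩ => ⟨s, x, hs⟩, fun ⟨s, x, hs⟩ => ⟨x, s, hs⟩⟩

namespace RERel

theorem comp {R : ℕ → ℕ → Prop} (hR : RERel R) {f g : ℕ → ℕ → ℕ}
    (hf : Computable₂ f) (hg : Computable₂ g) : RERel fun k x => R (f k x) (g k x) := by
  obtain ⟨W, hW, hWR⟩ := hR
  refine ⟨fun y => W (Nat.pair (f y.unpair.1 y.unpair.2) (g y.unpair.1 y.unpair.2)), ?_, ?_⟩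
  · have hu₁ : Computable fun y : ℕ => y.unpair.1 := Computable.fst.comp Computable.unpair
    have hu₂ : Computable fun y : ℕ => y.unpair.2 := Computable.snd.comp Computable.unpair
    exact hW.comp (Computable₂.comp Primrec₂.natPair.to_comp (hf.comp hu₁ hu₂) (hg.comp hu₁ hu₂))
  · intro k x
    simp only [Nat.unpair_pair, hWR]

theorem exists_computable_choice {R : ℕ → ℕ → Prop} (hR : RERel R) (htot : ∀ k, ∃ m, R k m) :
    ∃ f : ℕ → ℕ, Computable f ∧ ∀ k, R k (f k) := by
  obtain ⟨W, hW, hWR⟩ := hR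
  obtain ⟨c, rfl⟩ := exists_code.1 (Partrec.nat_iff.1 hW)
  -- search over `t = pair m s` for a witness `m` whose membership halts within `s` steps
  let g : ℕ → ℕ → Option ℕ := fun k t =>
    (evaln t.unpair.2 c (Nat.pair k t.unpair.1)).map fun _ => t.unpair.1
  have hg : Computable₂ g := by
    have hm : Primrec fun p : ℕ × ℕ => p.2.unpair.1 :=
      Primrec.fst.comp (Primrec.unpair.comp Primrec.snd)
    have hs : Primrec fun p : ℕ × ℕ => p.2.unpair.2 :=
      Primrec.snd.comp (Primrec.unpair.comp Primrec.snd)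
    have hev : Primrec fun p : ℕ × ℕ => evaln p.2.unpair.2 c (Nat.pair p.1 p.2.unpair.1) :=
      primrec_evaln.comp ((hs.pair (Primrec.const c)).pair (Primrec₂.natPair.comp Primrec.fst hm))
    exact (Primrec.option_map hev (hm.comp Primrec.fst).to₂).to_comp
  have hmem : ∀ k m, m ∈ Nat.rfindOpt (g k) → R k m := by
    intro k m hm
    obtain ⟨t, ht⟩ := Nat.rfindOpt_spec hm
    obtain ⟨v, hv, rfl⟩ := Option.map_eq_some_iff.1 ht
    exact (hWR k _).2 ((eval_dom_iff_exists_evaln_isSome _ _).2 ⟨t.unpair.2, by simp [hv]⟩)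
  have hdom : ∀ k, (Nat.rfindOpt (g k)).Dom := by
    intro k
    obtain ⟨m, hm⟩ := htot k
    obtain ⟨s, hs⟩ := (eval_dom_iff_exists_evaln_isSome _ _).1 ((hWR k m).1 hm)
    obtain ⟨v, hv⟩ := Option.isSome_iff_exists.1 hs
    exact Nat.rfindOpt_dom.2 ⟨Nat.pair m s, m, by simp [g, hv]⟩
  exact ⟨fun k => (Nat.rfindOpt (g k)).get (hdom k),
    (Partrec.rfindOpt hg).of_eq_tot fun k => Part.get_mem _, fun k => hmem k _ (Part.get_mem _)⟩

theorem exists_computable_of_unbounded {R : ℕ → ℕ → Prop} (hR : RERel R)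
    (hunb : ∀ L, ∃ n, L < n ∧ ∃ m, R n m) :
    ∃ f : ℕ → ℕ, Computable f ∧ ∀ k, ∃ n, k < n ∧ R n (f k) := by
  -- choose `x = pair j m` with `R (k + 1 + j) m`, then keep `m`
  have hshift : RERel fun k x => R (k + 1 + x.unpair.1) x.unpair.2 :=
    hR.comp (Primrec.nat_add.comp (Primrec.succ.comp Primrec.fst)
        (Primrec.fst.comp (Primrec.unpair.comp Primrec.snd))).to_comp
      (Primrec.snd.comp (Primrec.unpair.comp Primrec.snd)).to_comp
  obtain ⟨g, hg, hgR⟩ := hshift.exists_computable_choice fun k => by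
    obtain ⟨n, hkn, m, hm⟩ := hunb k
    refine ⟨Nat.pair (n - (k + 1)) m, ?_⟩
    rwa [Nat.unpair_pair, Nat.add_sub_cancel' hkn]
  exact ⟨fun k => (g k).unpair.2, Computable.snd.comp (Computable.unpair.comp hg),
    fun k => ⟨_, by omega, hgR k⟩⟩

end RERel

theorem exists_two_mul_log_add_lt (c : ℕ) : ∃ k, 2 * Nat.log 2 (k + 2) + c < k := by
  refine ⟨2 ^ c * 16, ?_⟩
  have hc : c < 2 ^ c := Nat.lt_two_pow_self
  have hlog : Nat.log 2 (2 ^ c * 16 + 2) < c + 5 :=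
    Nat.log_lt_of_lt_pow (by positivity) (by rw [pow_add]; omega)
  omega

/-- Chaitin's incompleteness, abstract form: if `P n m` is a computably
enumerable relation ("there is a proof that `C m ≥ n`") that is sound for a
complexity `C` satisfying the invariance property, then only finitely many
thresholds `n` admit any provably `n`-incompressible number. -/
theorem chaitin_incompleteness (C : ℕ → ℕ)
    (hinv : ∀ f : ℕ → ℕ, Computable f →
      ∃ c : ℕ, ∀ k : ℕ, C (f k) ≤ 2 * Nat.log 2 (k + 2) + c)
    (P : ℕ → ℕ → Prop)
    (hce : ∃ W : ℕ →. ℕ, Partrec W ∧ ∀ n m : ℕ, (P n m ↔ (W (Nat.pair n m)).Dom))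
    (hsound : ∀ n m : ℕ, P n m → n ≤ C m) :
    ∃ L : ℕ, ∀ n : ℕ, L < n → ∀ m : ℕ, ¬ P n m := by
  by_contra! hunb
  obtain ⟨f, hf, hfP⟩ := RERel.exists_computable_of_unbounded hce hunb
  have hlarge : ∀ k, k < C (f k) := fun k => by
    obtain ⟨n, hkn, hn⟩ := hfP k
    exact hkn.trans_le (hsound n _ hn)
  obtain ⟨c, hc⟩ := hinv f hf
  obtain ⟨k, hk⟩ := exists_two_mul_log_add_lt c
  exact (hlarge k).asymm ((hc k).trans_lt hk)
end

section
/- The limiting frequency claim for a 'random' binary sequence is consistent with measure theory: for almost every x in [0,1] (with respect to Lebesgue measure), the binary digits of x have limiting frequency 1/2, i.e., (1/N) · #{n < N : digit n of x = 1} → 1/2 as N → ∞ (Borel's normal number theorem for base 2). -/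
/-!
The `n`-th binary digit of `x` is `1` exactly when `2 ^ n • x` lies in the upper half `[1/2, 1)`
of the circle `ℝ ⧸ ℤ`, so the digits are read off along the orbit of the doubling map, which
preserves Haar measure. The half-turn `y ↦ y + 1/2` swaps the upper half with its complement,
preserves Haar measure, and fixes every set `{y | 2 ^ k • y ∈ B}` with `k ≥ 1`; hence the upper
half carries exactly half of such a set. This makes the events "digit `n` is `1`" pairwise
independent of probability `1/2`, and the strong law of large numbers, which needs only pairwise
independence, gives limiting frequency `1/2` almost surely. Lebesgue measure on `[0, 1]` is carried
to Haar measure by the covering map `ℝ → ℝ ⧸ ℤ`.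
-/

open MeasureTheory ProbabilityTheory Filter Set
open scoped Topology

theorem ProbabilityTheory.IndepSet.indepFun_indicator {Ω M : Type*} {mΩ : MeasurableSpace Ω}
    {μ : Measure Ω} [Zero M] [MeasurableSpace M] {s t : Set Ω} (h : IndepSet s t μ) (c d : M) :
    IndepFun (s.indicator fun _ ↦ c) (t.indicator fun _ ↦ d) μ := by
  rw [IndepFun_iff_Indep]
  rw [IndepSet_iff_Indep] at h
  open MeasurableSpace in
  exact indep_of_indep_of_le_right
    (indep_of_indep_of_le_left h (comap_indicator_const_le_generateFrom_singleton s c))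
    (comap_indicator_const_le_generateFrom_singleton t d)

theorem MeasureTheory.MeasurePreserving.identDistrib_comp {Ω β : Type*} {mΩ : MeasurableSpace Ω}
    {mβ : MeasurableSpace β} {μ : Measure Ω} {g : Ω → Ω} {f : Ω → β}
    (hg : MeasurePreserving g μ μ) (hf : Measurable f) : IdentDistrib (f ∘ g) f μ μ :=
  (IdentDistrib.mk hg.aemeasurable aemeasurable_id (by rw [hg.map_eq, Measure.map_id])).comp hf

theorem MeasureTheory.Measure.measurePreserving_nsmul {G : Type*} [AddCommGroup G]
    [TopologicalSpace G] [IsTopologicalAddGroup G] [MeasurableSpace G] [BorelSpace G]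
    (μ : Measure G) [μ.IsAddHaarMeasure] [CompactSpace G] [DivisibleBy G ℤ] {n : ℕ} (hn : n ≠ 0) :
    MeasurePreserving (fun g ↦ n • g) μ μ := by
  simpa only [natCast_zsmul] using Measure.measurePreserving_zsmul μ (Int.natCast_ne_zero.mpr hn)

section FloorRing

variable {R : Type*} [Field R] [LinearOrder R] [IsStrictOrderedRing R] [FloorRing R]

lemma Int.floor_two_mul_sub_two_mul_floor_eq_one_iff (x : R) :
    ⌊2 * x⌋ - 2 * ⌊x⌋ = 1 ↔ 1 / 2 ≤ Int.fract x := by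
  have h : ⌊2 * x⌋ = ⌊2 * Int.fract x⌋ + 2 * ⌊x⌋ := by
    rw [← Int.floor_add_intCast]; congr 1; push_cast; rw [Int.fract]; ring
  have h0 := Int.fract_nonneg x
  have h1 := Int.fract_lt_one x
  rw [h, add_sub_cancel_right, Int.floor_eq_iff]
  push_cast
  constructor
  · rintro ⟨hle, -⟩; linarith
  · intro hle; constructor <;> linarith

lemma Int.half_le_fract_add_half_iff (x : R) :
    1 / 2 ≤ Int.fract (x + 1 / 2) ↔ Int.fract x < 1 / 2 := by
  have h0 := Int.fract_nonneg x
  have h1 := Int.fract_lt_one x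
  rcases lt_or_ge (Int.fract x) (1 / 2) with h | h
  · have : Int.fract (x + 1 / 2) = Int.fract x + 1 / 2 :=
      Int.fract_eq_iff.mpr ⟨by linarith, by linarith, ⌊x⌋, by rw [Int.fract]; ring⟩
    simp only [this, h, iff_true]; linarith
  · have : Int.fract (x + 1 / 2) = Int.fract x - 1 / 2 :=
      Int.fract_eq_iff.mpr ⟨by linarith, by linarith, ⌊x⌋ + 1, by push_cast; rw [Int.fract]; ring⟩
    simp only [this, iff_false, not_lt.mpr h]; linarith

end FloorRing

instance : IsProbabilityMeasure (volume : Measure UnitAddCircle) := ⟨UnitAddCircle.measure_univ⟩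

def UnitAddCircle.upperHalf : Set UnitAddCircle := {y | 1 / 2 ≤ (AddCircle.equivIco 1 0 y : ℝ)}

def UnitAddCircle.digitOneSet (n : ℕ) : Set UnitAddCircle := (fun y ↦ 2 ^ n • y) ⁻¹' upperHalf

namespace UnitAddCircle

lemma coe_mem_upperHalf_iff (x : ℝ) : (x : UnitAddCircle) ∈ upperHalf ↔ 1 / 2 ≤ Int.fract x := by
  simp [upperHalf, AddCircle.coe_equivIco_mk_apply]

lemma measurableSet_upperHalf : MeasurableSet upperHalf :=
  measurableSet_le measurable_const
    (measurable_subtype_coe.comp (AddCircle.measurableEquivIco 1 0).measurable)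

lemma add_half_mem_upperHalf_iff (y : UnitAddCircle) :
    y + ((1 / 2 : ℝ) : UnitAddCircle) ∈ upperHalf ↔ y ∉ upperHalf := by
  induction y using QuotientAddGroup.induction_on with
  | H x =>
    rw [← AddCircle.coe_add, coe_mem_upperHalf_iff, coe_mem_upperHalf_iff, not_le]
    exact Int.half_le_fract_add_half_iff x

theorem volume_upperHalf_inter {S : Set UnitAddCircle}
    (h : (· + ((1 / 2 : ℝ) : UnitAddCircle)) ⁻¹' S = S) :
    volume (upperHalf ∩ S) = 2⁻¹ * volume S := by
  have hswap : (· + ((1 / 2 : ℝ) : UnitAddCircle)) ⁻¹' (upperHalf ∩ S) = S \ upperHalf := by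
    ext y
    rw [preimage_inter, h, mem_inter_iff, mem_preimage, add_half_mem_upperHalf_iff, Set.mem_sdiff,
      and_comm]
  have hsplit := measure_inter_add_sdiff S measurableSet_upperHalf (μ := volume)
  rw [← hswap, measure_preimage_add_right, inter_comm, ← two_mul] at hsplit
  rw [← hsplit, ← mul_assoc, ENNReal.inv_mul_cancel two_ne_zero ENNReal.ofNat_ne_top, one_mul]

lemma two_pow_nsmul_add_half {k : ℕ} (hk : k ≠ 0) (y : UnitAddCircle) :
    2 ^ k • (y + ((1 / 2 : ℝ) : UnitAddCircle)) = 2 ^ k • y := by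
  obtain ⟨k, rfl⟩ := Nat.exists_eq_succ_of_ne_zero hk
  have htwo : 2 • ((1 / 2 : ℝ) : UnitAddCircle) = 0 := by
    rw [← AddCircle.coe_nsmul]
    norm_num
  simp only [smul_add, pow_succ, mul_nsmul', htwo, smul_zero, add_zero]

lemma measurableSet_digitOneSet (n : ℕ) : MeasurableSet (digitOneSet n) :=
  measurable_const_smul _ measurableSet_upperHalf

lemma measurePreserving_two_pow_nsmul (n : ℕ) :
    MeasurePreserving (fun y : UnitAddCircle ↦ 2 ^ n • y) volume volume :=
  Measure.measurePreserving_nsmul volume (pow_ne_zero n two_ne_zero)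

lemma volume_digitOneSet (n : ℕ) : volume (digitOneSet n) = 2⁻¹ := by
  rw [digitOneSet, (measurePreserving_two_pow_nsmul n).measure_preimage
    measurableSet_upperHalf.nullMeasurableSet, ← inter_univ upperHalf,
    volume_upperHalf_inter preimage_univ, measure_univ, mul_one]

lemma indepSet_digitOneSet_of_lt {m n : ℕ} (h : m < n) :
    IndepSet (digitOneSet m) (digitOneSet n) := by
  obtain ⟨k, hk, rfl⟩ : ∃ k, k ≠ 0 ∧ n = k + m := ⟨n - m, by omega, by omega⟩
  have hpre : digitOneSet m ∩ digitOneSet (k + m)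
      = (fun y ↦ 2 ^ m • y) ⁻¹' (upperHalf ∩ digitOneSet k) := by
    ext y
    simp only [digitOneSet, mem_inter_iff, mem_preimage, pow_add, mul_nsmul']
  have hinv : (· + ((1 / 2 : ℝ) : UnitAddCircle)) ⁻¹' digitOneSet k = digitOneSet k := by
    ext y
    simp only [digitOneSet, mem_preimage, two_pow_nsmul_add_half hk]
  rw [indepSet_iff_measure_inter_eq_mul (measurableSet_digitOneSet m)
    (measurableSet_digitOneSet _) volume, hpre,
    (measurePreserving_two_pow_nsmul m).measure_preimage
      (measurableSet_upperHalf.inter (measurableSet_digitOneSet k)).nullMeasurableSet,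
    volume_upperHalf_inter hinv, volume_digitOneSet, volume_digitOneSet, volume_digitOneSet]

lemma coe_mem_digitOneSet_iff (n : ℕ) (x : ℝ) :
    (x : UnitAddCircle) ∈ digitOneSet n ↔ ⌊(2 : ℝ) ^ (n + 1) * x⌋ - 2 * ⌊(2 : ℝ) ^ n * x⌋ = 1 := by
  rw [digitOneSet, mem_preimage, ← AddCircle.coe_nsmul, nsmul_eq_mul, coe_mem_upperHalf_iff,
    pow_succ', mul_assoc, Int.floor_two_mul_sub_two_mul_floor_eq_one_iff]
  push_cast
  rfl

theorem ae_tendsto_digitOneSet_frequency :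
    ∀ᵐ y : UnitAddCircle, Tendsto
      (fun N : ℕ ↦ (∑ i ∈ Finset.range N, (digitOneSet i).indicator (fun _ ↦ (1 : ℝ)) y) / N)
      atTop (𝓝 (1 / 2)) := by
  have hindep : ∀ {m n : ℕ}, m ≠ n → IndepSet (digitOneSet m) (digitOneSet n) := fun hmn ↦
    hmn.lt_or_gt.elim indepSet_digitOneSet_of_lt fun h ↦ (indepSet_digitOneSet_of_lt h).symm
  have hident (i : ℕ) : IdentDistrib ((digitOneSet i).indicator fun _ ↦ (1 : ℝ))
      ((digitOneSet 0).indicator fun _ ↦ 1) := by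
    have hcomp : (digitOneSet i).indicator (fun _ ↦ (1 : ℝ))
        = upperHalf.indicator (fun _ ↦ 1) ∘ fun y ↦ 2 ^ i • y :=
      funext fun _ ↦ indicator_comp_right (g := fun _ ↦ (1 : ℝ)) _
    have hzero : digitOneSet 0 = upperHalf := by simp [digitOneSet]
    rw [hcomp, hzero]
    exact (measurePreserving_two_pow_nsmul i).identDistrib_comp
      (measurable_const.indicator measurableSet_upperHalf)
  have hmean : ∫ y, (digitOneSet 0).indicator (fun _ ↦ (1 : ℝ)) y = 1 / 2 := by
    rw [integral_indicator_const _ (measurableSet_digitOneSet 0), measureReal_def,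
      volume_digitOneSet]
    norm_num
  simpa only [hmean] using strong_law_ae_real _
    ((integrable_const 1).indicator (measurableSet_digitOneSet 0))
    (fun m n hmn ↦ (hindep hmn).indepFun_indicator 1 1) hident

end UnitAddCircle

/-- Borel's normal number theorem for base 2: for almost every `x ∈ [0,1]`, the
binary digits of `x` (the `n`-th digit being `⌊2^(n+1) x⌋ - 2⌊2^n x⌋`) have
limiting frequency `1/2`. -/
theorem borel_normal_base_two :
    ∀ᵐ x ∂(volume.restrict (Set.Icc (0 : ℝ) 1)),
      Tendsto
        (fun N : ℕ =>
          (((Finset.range N).filter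
              (fun n => ⌊(2 : ℝ) ^ (n + 1) * x⌋ - 2 * ⌊(2 : ℝ) ^ n * x⌋ = 1)).card : ℝ) / N)
        atTop (nhds (1 / 2)) := by
  have hmk : MeasurePreserving ((↑) : ℝ → UnitAddCircle) (volume.restrict (Icc 0 1)) volume := by
    simpa [Measure.restrict_congr_set Ioc_ae_eq_Icc] using UnitAddCircle.measurePreserving_mk 0
  filter_upwards [hmk.quasiMeasurePreserving.ae UnitAddCircle.ae_tendsto_digitOneSet_frequency]
    with x hx
  classical
  simpa only [Finset.natCast_card_filter, Set.indicator_apply,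
    UnitAddCircle.coe_mem_digitOneSet_iff] using hx
end
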